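/- Let p be an odd prime and e = (e_1, ..., e_{p-1}) in F_p^{p-1}. If the second difference tuple e'' (with entries e''_i = e_{i-2} - 2e_{i-1} + e_i for i in {3,...,p-1}) is symmetric, i.e. e''_{i+1} = e''_{p+1-i} for all i in {2, ..., p-2}, then 2(e_{p-1} - e_1) + (e_2 - e_{p-2}) = 0 in F_p. -/
import Mathlib


/-- If the second difference tuple `e''` of `e ∈ 𝔽_p^{p-1}` is symmetric
(`e''_{i+1} = e''_{p+1-i}` for all `i ∈ {2, …, p-2}`), then
`2(e_{p-1} - e_1) + (e_2 - e_{p-2}) = 0` in `𝔽_p`.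
Indices `{1, …, p-1}` are encoded as the nonzero elements of `ZMod p`,
and `e''_j = e_{j-2} - 2 e_{j-1} + e_j` for `j ∈ {3, …, p-1}`. -/
theorem linear_eq_of_second_diff_sym (p : ℕ) [Fact p.Prime] (hodd : Odd p)
    (e : ZMod p → ZMod p)
    (hsym'' : ∀ i : ZMod p, i ≠ 0 → i ≠ 1 → i ≠ -1 →
      e ((i + 1) - 2) - 2 * e ((i + 1) - 1) + e (i + 1)
        = e ((1 - i) - 2) - 2 * e ((1 - i) - 1) + e (1 - i)) :
    2 * (e (-1) - e 1) + (e 2 - e (-2)) = 0 := by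
  have hp : p.Prime := Fact.out
  have h2 : (2 : ZMod p) ≠ 0 := by
    intro h
    have hd : p ∣ 2 := (ZMod.natCast_eq_zero_iff 2 p).mp (by exact_mod_cast h)
    have := (Nat.prime_dvd_prime_iff_eq hp Nat.prime_two).mp hd
    rw [this] at hodd
    exact (Nat.not_odd_iff_even.mpr even_two) hodd
  set g : ZMod p → ZMod p := fun i => e (i - 1) - 2 * e i + e (i + 1) with hg
  have hsym : ∀ i : ZMod p, i ≠ 0 → i ≠ 1 → i ≠ -1 → g i = g (-i) := by
    intro i h0 h1 hm1
    have := hsym'' i h0 h1 hm1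
    simp only [hg]
    convert this using 3 <;> ring
  -- full weighted sum vanishes
  have hfull : ∑ i : ZMod p, i * g i = 0 := by
    have ha : ∑ i : ZMod p, i * e (i - 1) = ∑ j : ZMod p, (j + 1) * e j := by
      apply Fintype.sum_equiv (Equiv.subRight (1 : ZMod p))
      intro j
      simp [Equiv.subRight]
    have hb : ∑ i : ZMod p, i * e (i + 1) = ∑ j : ZMod p, (j - 1) * e j := by
      apply Fintype.sum_equiv (Equiv.addRight (1 : ZMod p))
      intro j
      simp [Equiv.addRight]
    have expand : ∑ i : ZMod p, i * g i
        = (∑ i : ZMod p, i * e (i - 1)) - 2 * (∑ i : ZMod p, i * e i)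
          + ∑ i : ZMod p, i * e (i + 1) := by
      rw [Finset.mul_sum, ← Finset.sum_sub_distrib, ← Finset.sum_add_distrib]
      exact Finset.sum_congr rfl fun i _ => by simp only [hg]; ring
    rw [expand, ha, hb, Finset.mul_sum, ← Finset.sum_sub_distrib,
      ← Finset.sum_add_distrib]
    exact Finset.sum_eq_zero fun i _ => by ring
  have h1m1 : (1 : ZMod p) ≠ -1 := by
    intro h
    apply h2
    linear_combination h
  have h01 : (0 : ZMod p) ≠ 1 := by
    haveI := Fact.out (p := p.Prime)
    exact zero_ne_one
  have h0m1 : (0 : ZMod p) ≠ -1 := by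
    intro h; exact h01 (by linear_combination -h)
  set S : Finset (ZMod p) := Finset.univ \ {0, 1, -1} with hS
  have hSmem : ∀ i : ZMod p, i ∈ S ↔ (i ≠ 0 ∧ i ≠ 1 ∧ i ≠ -1) := by
    intro i
    simp [hS, and_assoc]
  have hA : ∑ i ∈ S, i * g i = 0 := by
    have hneg : ∑ i ∈ S, i * g i = ∑ i ∈ S, (-i) * g (-i) := by
      apply Finset.sum_equiv (Equiv.neg (ZMod p))
      · intro i
        simp only [hSmem, Equiv.neg_apply]
        constructor
        · rintro ⟨a, b, c⟩
          exact ⟨fun h => a (by linear_combination -h),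
            fun h => c (by linear_combination -h),
            fun h => b (by linear_combination -h)⟩
        · rintro ⟨a, b, c⟩
          exact ⟨fun h => a (by linear_combination -h),
            fun h => c (by linear_combination -h),
            fun h => b (by linear_combination -h)⟩
      · intro i _
        simp [Equiv.neg_apply]
    have hneg2 : ∑ i ∈ S, (-i) * g (-i) = -∑ i ∈ S, i * g i := by
      rw [← Finset.sum_neg_distrib]
      refine Finset.sum_congr rfl fun i hi => ?_
      rw [hSmem] at hi
      rw [← hsym i hi.1 hi.2.1 hi.2.2]
      ring
    have h2A : (2 : ZMod p) * ∑ i ∈ S, i * g i = 0 := by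
      linear_combination hneg.trans hneg2
    rcases mul_eq_zero.mp h2A with h | h
    · exact absurd h h2
    · exact h
  -- boundary terms
  have hsub : ({0, 1, -1} : Finset (ZMod p)) ⊆ Finset.univ := Finset.subset_univ _
  have hsplit : (∑ i ∈ S, i * g i) + ∑ i ∈ ({0, 1, -1} : Finset (ZMod p)), i * g i
      = ∑ i : ZMod p, i * g i := Finset.sum_sdiff hsub
  have hbd : ∑ i ∈ ({0, 1, -1} : Finset (ZMod p)), i * g i = g 1 - g (-1) := by
    rw [Finset.sum_insert (by simp [h01, h0m1]),
      Finset.sum_insert (by simp [h1m1]), Finset.sum_singleton]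
    ring
  rw [hA, hbd, hfull, zero_add] at hsplit
  have hg1 : g 1 = e 0 - 2 * e 1 + e 2 := by
    simp only [hg]; norm_num
  have hgm1 : g (-1) = e (-2) - 2 * e (-1) + e 0 := by
    simp only [hg]; norm_num
  rw [hg1, hgm1] at hsplit
  linear_combination hsplit
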